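/- The Bargmann–Fock action is a module action of the Wick algebra: for all f, g ∈ A[ħ] and all s ∈ F[ħ], one has f ⊛ (g ⊛ s) = (f ⋆ g) ⊛ s, and 1 ⊛ s = s. -/

import Mathlib

/-!
STATEMENT 9: The Bargmann–Fock action is a module action of the Wick algebra:
for all f, g ∈ A[ħ] and all s ∈ F[ħ], one has f ⊛ (g ⊛ s) = (f ⋆ g) ⊛ s, and
1 ⊛ s = s.  Here F[ħ] = ℂ[z¹,…,zⁿ][ħ] and the action is determined on
monomials by (y^a ȳ^b) ⊛ s = (−ħ)^{|b|} ∂^{|b|}(z^a·s)/∂z^b, extended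
ℂ[ħ]-bilinearly.
-/

namespace Stmt9

open MvPolynomial

/-- Variables: `Sum.inl (Sum.inl i)` is `yⁱ`, `Sum.inl (Sum.inr i)` is `ȳⁱ`,
and `Sum.inr ()` is the formal variable `ħ`. -/
abbrev V (n : ℕ) : Type := (Fin n ⊕ Fin n) ⊕ Unit

/-- `A[ħ] = ℂ[y¹,…,yⁿ,ȳ¹,…,ȳⁿ][ħ]`. -/
abbrev W (n : ℕ) : Type := MvPolynomial (V n) ℂ

/-- `A = ℂ[y¹,…,yⁿ,ȳ¹,…,ȳⁿ]` (no `ħ`); `Sum.inl i` is `yⁱ`, `Sum.inr i` is `ȳⁱ`. -/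
abbrev A (n : ℕ) : Type := MvPolynomial (Fin n ⊕ Fin n) ℂ

/-- The variable `ħ`. -/
noncomputable def hbar (n : ℕ) : W n := X (Sum.inr ())

/-- The variable `yⁱ`. -/
def yv {n : ℕ} (i : Fin n) : V n := Sum.inl (Sum.inl i)

/-- The variable `ȳⁱ`. -/
def yb {n : ℕ} (i : Fin n) : V n := Sum.inl (Sum.inr i)

/-- The canonical inclusion `A → A[ħ]`. -/
noncomputable def emb {n : ℕ} : A n →ₐ[ℂ] W n := rename Sum.inl

/-- Iterated partial derivative along a tuple of variables. -/
noncomputable def iterD {n k : ℕ} (vs : Fin k → V n) (f : W n) : W n :=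
  (List.ofFn vs).foldr (fun v acc => pderiv v acc) f

/-- The `k`-th term `(1/k!) Σ_{i₁,…,i_k} (∂ᵏf/∂y^{i₁}⋯∂y^{i_k})·(∂ᵏg/∂ȳ^{i₁}⋯∂ȳ^{i_k})`
in the Wick product. -/
noncomputable def wickTerm {n : ℕ} (k : ℕ) (f g : W n) : W n :=
  ((k.factorial : ℂ))⁻¹ •
    ∑ t : Fin k → Fin n,
      iterD (fun j => yv (t j)) f * iterD (fun j => yb (t j)) g

/-- The fiberwise Wick product `f ⋆ g = Σ_{k≥0} ħᵏ · (k-th term)`.  The sum is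
finite: the `k`-fold `y`-derivative of `f` vanishes once `k > totalDegree f`,
so truncating the range at `totalDegree f + 1` loses nothing. -/
noncomputable def wick {n : ℕ} (f g : W n) : W n :=
  ∑ k ∈ Finset.range (f.totalDegree + 1), hbar n ^ k * wickTerm k f g

/-- `F[ħ] = ℂ[z¹,…,zⁿ][ħ]`; `Sum.inl i` is `zⁱ` and `Sum.inr ()` is `ħ`. -/
abbrev Fz (n : ℕ) : Type := MvPolynomial (Fin n ⊕ Unit) ℂ

/-- The iterated partial derivative `∂^{|b|}/∂z^b` for a multi-index `b`. -/
noncomputable def dz {n : ℕ} (b : Fin n → ℕ) (s : Fz n) : Fz n :=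
  (List.finRange n).foldr (fun i t => (fun u => pderiv (Sum.inl i) u)^[b i] t) s

/-- The Bargmann–Fock action of `A[ħ]` on `F[ħ]`: the monomial `ħ^m y^a ȳ^b`
acts on `s` by `ħ^m (−ħ)^{|b|} ∂^{|b|}(z^a·s)/∂z^b`, extended ℂ-linearly. -/
noncomputable def bf {n : ℕ} (f : W n) (s : Fz n) : Fz n :=
  ∑ m ∈ f.support,
    (C (coeff m f) * (X (Sum.inr ()) : Fz n) ^ m (Sum.inr ()) *
        (-(X (Sum.inr ()) : Fz n)) ^ (∑ i : Fin n, m (yb i))) *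
      dz (fun i => m (yb i))
        ((∏ i : Fin n, (X (Sum.inl i) : Fz n) ^ m (yv i)) * s)

/-!
Assemble the action into a linear map `bfOp : A[ħ] → End F[ħ]` sending the monomial `ħᵏ yᵃ ȳᵇ`
to `ħᵏ (−ħ∂)ᵇ ∘ zᵃ`. Left multiplication by `ħ`, `yⁱ`, `ȳⁱ` then becomes `ħ ∘ bfOp f`,
`bfOp f ∘ zⁱ` and `(−ħ∂ᵢ) ∘ bfOp f`, and the relation `[∂ᵢ, zʲ] = δᵢⱼ` gives
`bfOp f ∘ ∂ᵢ = ∂ᵢ ∘ bfOp f − bfOp (∂f/∂yⁱ)`. On the Wick side, `y`, `ħ` and constants pass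
through the second factor, while the Leibniz rule for the `ȳ`-derivatives gives
`f ⋆ (ȳⁱ g) = ȳⁱ (f ⋆ g) + ħ (∂f/∂yⁱ) ⋆ g`. These relations match, so induction on `g` yields
`bfOp (f ⋆ g) = bfOp f ∘ bfOp g`.
-/

end Stmt9

namespace MvPolynomial

variable {R σ : Type*}

theorem pderiv_pderiv_comm [CommRing R] (i j : σ) (f : MvPolynomial σ R) :
    pderiv i (pderiv j f) = pderiv j (pderiv i f) := by
  have h : ⁅pderiv i, pderiv j⁆ = (0 : Derivation R (MvPolynomial σ R) (MvPolynomial σ R)) :=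
    derivation_ext fun v => by
      classical
      rw [Derivation.commutator_apply, pderiv_X, pderiv_X]
      simp [Pi.single_apply, apply_ite]
  simpa [Derivation.commutator_apply, sub_eq_zero] using congr($h f)

variable [CommSemiring R]

theorem pderiv_mul_lmul (v : σ) (p : MvPolynomial σ R) :
    ((pderiv v).toLinearMap : Module.End R (MvPolynomial σ R)) * Algebra.lmul R _ p
      = Algebra.lmul R _ p * (pderiv v).toLinearMap + Algebra.lmul R _ (pderiv v p) := by
  refine LinearMap.ext fun u => ?_
  simp [mul_comm]

theorem commute_pderiv_lmul {v : σ} {p : MvPolynomial σ R} (hp : pderiv v p = 0) :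
    Commute ((pderiv v).toLinearMap : Module.End R (MvPolynomial σ R)) (Algebra.lmul R _ p) := by
  rw [Commute, SemiconjBy, pderiv_mul_lmul, hp, map_zero, add_zero]

theorem totalDegree_pderiv_lt {v : σ} {f : MvPolynomial σ R} (h : pderiv v f ≠ 0) :
    (pderiv v f).totalDegree < f.totalDegree := by
  have key : ∀ m ∈ (pderiv v f).support, (m.sum fun _ e => e) < f.totalDegree := by
    intro m hm
    rw [mem_support_iff, coeff_pderiv] at hm
    have := le_totalDegree (mem_support_iff.mpr (left_ne_zero_of_mul hm))
    rw [Finsupp.sum_add_index' (fun _ => rfl) (fun _ _ _ => rfl), Finsupp.sum_single_index rfl]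
      at this
    omega
  obtain ⟨m, hm⟩ := support_nonempty.mpr h
  exact (Finset.sup_lt_iff (lt_of_le_of_lt (Nat.zero_le _) (key m hm))).mpr key

end MvPolynomial

theorem List.foldr_eq_prod_map_apply {α R M : Type*} [Semiring R] [AddCommMonoid M] [Module R M]
    (φ : α → Module.End R M) (l : List α) (x : M) :
    l.foldr (fun a y => φ a y) x = (l.map φ).prod x := by
  induction l with
  | nil => rfl
  | cons a l ih => simp [ih]

theorem List.prod_map_pow_add_single {ι M : Type*} [Monoid M] [DecidableEq ι] {D : ι → M}
    (hD : ∀ i j, Commute (D i) (D j)) (b : ι → ℕ) {l : List ι} (hl : l.Nodup) {i : ι}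
    (hi : i ∈ l) :
    (l.map fun j => D j ^ (b + Pi.single i 1 : ι → ℕ) j).prod
      = D i * (l.map fun j => D j ^ b j).prod := by
  induction l with
  | nil => simp at hi
  | cons j l ih =>
    rw [List.nodup_cons] at hl
    simp only [List.map_cons, List.prod_cons]
    rcases eq_or_ne j i with rfl | hji
    · have hrest :
          (l.map fun k => D k ^ (b + Pi.single j 1 : ι → ℕ) k) = l.map fun k => D k ^ b k :=
        List.map_congr_left fun k hk => by
          rw [Pi.add_apply, Pi.single_eq_of_ne (by rintro rfl; exact hl.1 hk), add_zero]
      rw [hrest, Pi.add_apply, Pi.single_eq_same, pow_succ', mul_assoc]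
    · rw [ih hl.2 ((List.mem_cons.mp hi).resolve_left hji.symm), Pi.add_apply,
        Pi.single_eq_of_ne hji, add_zero, ((hD j i).pow_left _).left_comm]

namespace Stmt9

open MvPolynomial

section Wick

variable {n : ℕ}

theorem iterD_eq_prod {k : ℕ} (vs : Fin k → V n) :
    iterD vs = ⇑((List.ofFn vs).map fun v => ((pderiv v).toLinearMap : Module.End ℂ (W n))).prod :=
  funext (List.foldr_eq_prod_map_apply _ _)

theorem iterD_succ {k : ℕ} (vs : Fin (k + 1) → V n) (f : W n) :
    iterD vs f = iterD (fun j => vs j.castSucc) (pderiv (vs (Fin.last k)) f) := by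
  rw [iterD, iterD, List.ofFn_succ', List.concat_eq_append, List.foldr_append]
  rfl

noncomputable def contraction (k : ℕ) (f g : W n) : W n :=
  ∑ t : Fin k → Fin n, iterD (fun j => yv (t j)) f * iterD (fun j => yb (t j)) g

theorem wickTerm_eq_smul_contraction (k : ℕ) (f g : W n) :
    wickTerm k f g = ((k.factorial : ℂ))⁻¹ • contraction k f g := rfl

theorem contraction_zero (f g : W n) : contraction 0 f g = f * g := by
  simp [contraction, iterD]

theorem contraction_succ (k : ℕ) (f g : W n) :
    contraction (k + 1) f g = ∑ i, contraction k (pderiv (yv i) f) (pderiv (yb i) g) := by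
  rw [contraction, ← (Fin.snocEquiv fun _ => Fin n).sum_comp, Fintype.sum_prod_type]
  simp [contraction, iterD_succ]

theorem contraction_zero_left (k : ℕ) (g : W n) : contraction k 0 g = 0 := by
  simp [contraction, iterD_eq_prod]

theorem contraction_zero_right (k : ℕ) (f : W n) : contraction k f 0 = 0 := by
  simp [contraction, iterD_eq_prod]

theorem contraction_add_right (k : ℕ) (f g g' : W n) :
    contraction k f (g + g') = contraction k f g + contraction k f g' := by
  simp [contraction, iterD_eq_prod, mul_add, Finset.sum_add_distrib]

theorem contraction_eq_zero_of_totalDegree_lt {k : ℕ} {f : W n} (g : W n)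
    (h : f.totalDegree < k) : contraction k f g = 0 := by
  induction k generalizing f g with
  | zero => omega
  | succ k ih =>
    rw [contraction_succ]
    refine Finset.sum_eq_zero fun i _ => ?_
    rcases eq_or_ne (pderiv (yv i) f) 0 with h0 | h0
    · rw [h0, contraction_zero_left]
    · exact ih _ (by have := totalDegree_pderiv_lt h0; omega)

theorem iterD_mul_of_pderiv_eq_zero {k : ℕ} (vs : Fin k → V n) {p : W n}
    (hp : ∀ j, pderiv (vs j) p = 0) (g : W n) : iterD vs (p * g) = p * iterD vs g := by
  have := Commute.list_prod_right
    ((List.ofFn vs).map fun v => ((pderiv v).toLinearMap : Module.End ℂ (W n)))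
    (Algebra.lmul ℂ (W n) p) fun D hD => by
      obtain ⟨v, hv, rfl⟩ := List.mem_map.mp hD
      obtain ⟨j, rfl⟩ := List.mem_ofFn.mp hv
      exact (commute_pderiv_lmul (hp j)).symm
  rw [iterD_eq_prod]
  simpa using (LinearMap.congr_fun this g).symm

theorem contraction_mul_right_of_pderiv_eq_zero {p : W n} (hp : ∀ i, pderiv (yb i) p = 0)
    (k : ℕ) (f g : W n) : contraction k f (p * g) = p * contraction k f g := by
  simp only [contraction, iterD_mul_of_pderiv_eq_zero _ (fun j => hp _), Finset.mul_sum]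
  exact Finset.sum_congr rfl fun t _ => mul_left_comm _ _ _

theorem contraction_succ_X_yb_mul_eq_add_sum (i₀ : Fin n) (k : ℕ) (f g : W n) :
    contraction (k + 1) f (X (yb i₀) * g) = contraction k (pderiv (yv i₀) f) g
      + ∑ i, contraction k (pderiv (yv i) f) (X (yb i₀) * pderiv (yb i) g) := by
  have hX : ∀ i, pderiv (yb i) (X (yb i₀) : W n) = if i = i₀ then 1 else 0 := fun i => by
    split_ifs with h
    · rw [h, pderiv_X_self]
    · exact pderiv_X_of_ne (by simpa [yb] using Ne.symm h)
  simp only [contraction_succ, pderiv_mul, hX, contraction_add_right, Finset.sum_add_distrib,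
    ite_mul, one_mul, zero_mul]
  congr 1
  simp [apply_ite (contraction k _), contraction_zero_right]

theorem contraction_succ_X_yb_mul (i₀ : Fin n) (k : ℕ) (f g : W n) :
    contraction (k + 1) f (X (yb i₀) * g)
      = X (yb i₀) * contraction (k + 1) f g + (k + 1 : ℂ) • contraction k (pderiv (yv i₀) f) g := by
  induction k generalizing f g with
  | zero =>
    rw [contraction_succ_X_yb_mul_eq_add_sum, contraction_succ, add_comm]
    simp only [contraction_zero, Finset.mul_sum, mul_left_comm (X (yb i₀) : W n),
      CharP.cast_eq_zero, zero_add, one_smul]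
  | succ k ih =>
    simp only [contraction_succ_X_yb_mul_eq_add_sum _ (k + 1), ih, Finset.sum_add_distrib,
      ← Finset.mul_sum, ← Finset.smul_sum, pderiv_pderiv_comm (yv i₀), ← contraction_succ]
    push_cast
    module

theorem wickTerm_succ_X_yb_mul (i₀ : Fin n) (k : ℕ) (f g : W n) :
    wickTerm (k + 1) f (X (yb i₀) * g)
      = X (yb i₀) * wickTerm (k + 1) f g + wickTerm k (pderiv (yv i₀) f) g := by
  have hfact : ((k + 1).factorial : ℂ)⁻¹ * (k + 1) = (k.factorial : ℂ)⁻¹ := by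
    rw [Nat.factorial_succ, Nat.cast_mul, mul_inv, mul_comm, ← mul_assoc, Nat.cast_add_one,
      mul_inv_cancel₀ (Nat.cast_add_one_ne_zero k), one_mul]
  simp only [wickTerm_eq_smul_contraction, contraction_succ_X_yb_mul, smul_add, smul_smul, hfact,
    mul_smul_comm]

theorem wickTerm_zero (f g : W n) : wickTerm 0 f g = f * g := by
  simp [wickTerm_eq_smul_contraction, contraction_zero]

theorem wickTerm_eq_zero_of_totalDegree_lt {k : ℕ} {f : W n} (g : W n)
    (h : f.totalDegree < k) : wickTerm k f g = 0 := by
  rw [wickTerm_eq_smul_contraction, contraction_eq_zero_of_totalDegree_lt g h, smul_zero]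

theorem wick_eq_sum_range {N : ℕ} {f : W n} (g : W n) (hN : f.totalDegree < N) :
    wick f g = ∑ k ∈ Finset.range N, hbar n ^ k * wickTerm k f g :=
  Finset.sum_subset (Finset.range_subset_range.mpr hN) fun k _ hk => by
    rw [wickTerm_eq_zero_of_totalDegree_lt g (by simpa using hk), mul_zero]

theorem wick_add_right (f g g' : W n) : wick f (g + g') = wick f g + wick f g' := by
  simp only [wick, wickTerm_eq_smul_contraction, contraction_add_right, smul_add, mul_add,
    Finset.sum_add_distrib]

theorem wick_C_right (f : W n) (c : ℂ) : wick f (C c) = C c * f := by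
  rw [wick, Finset.sum_range_succ', Finset.sum_eq_zero fun k _ => by
    rw [wickTerm_eq_smul_contraction, contraction_succ]
    simp [contraction_zero_right]]
  simp [wickTerm_eq_smul_contraction, contraction_zero, mul_comm]

theorem wick_mul_right_of_pderiv_eq_zero {p : W n} (hp : ∀ i, pderiv (yb i) p = 0)
    (f g : W n) : wick f (p * g) = p * wick f g := by
  simp only [wick, wickTerm_eq_smul_contraction, contraction_mul_right_of_pderiv_eq_zero hp,
    Finset.mul_sum, mul_smul_comm, mul_left_comm p]

theorem wick_X_yb_mul (i₀ : Fin n) (f g : W n) :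
    wick f (X (yb i₀) * g)
      = X (yb i₀) * wick f g + X (Sum.inr ()) * wick (pderiv (yv i₀) f) g := by
  have hd : (pderiv (yv i₀) f).totalDegree < f.totalDegree + 1 := by
    rcases eq_or_ne (pderiv (yv i₀) f) 0 with h | h
    · simp [h]
    · have := totalDegree_pderiv_lt h; omega
  rw [wick_eq_sum_range _ (by omega : f.totalDegree < f.totalDegree + 2),
    wick_eq_sum_range _ (by omega : f.totalDegree < f.totalDegree + 2), wick_eq_sum_range _ hd,
    Finset.sum_range_succ', Finset.sum_range_succ' (fun k => hbar n ^ k * wickTerm k f g)]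
  have hsplit : ∀ k, hbar n ^ (k + 1) * wickTerm (k + 1) f (X (yb i₀) * g)
      = X (yb i₀) * (hbar n ^ (k + 1) * wickTerm (k + 1) f g)
        + X (Sum.inr ()) * (hbar n ^ k * wickTerm k (pderiv (yv i₀) f) g) := fun k => by
    rw [wickTerm_succ_X_yb_mul, hbar]
    ring
  simp only [hsplit, Finset.sum_add_distrib, ← Finset.mul_sum, wickTerm_zero]
  ring

end Wick

section Action

variable {n : ℕ}

noncomputable def pderivZ (i : Fin n) : Module.End ℂ (Fz n) := (pderiv (Sum.inl i)).toLinearMap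

theorem commute_pderivZ (i j : Fin n) : Commute (pderivZ i) (pderivZ j) :=
  LinearMap.ext fun u => pderiv_pderiv_comm _ _ u

theorem commute_pderivZ_lmul {i : Fin n} {p : Fz n} (hp : pderiv (Sum.inl i) p = 0) :
    Commute (pderivZ i) (Algebra.lmul ℂ (Fz n) p) :=
  commute_pderiv_lmul hp

noncomputable def dzOp (b : Fin n → ℕ) : Module.End ℂ (Fz n) :=
  ((List.finRange n).map fun i => pderivZ i ^ b i).prod

theorem dz_eq_dzOp (b : Fin n → ℕ) : dz b = ⇑(dzOp b) := funext fun s => by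
  simp only [dz, dzOp, ← List.foldr_eq_prod_map_apply, Module.End.pow_apply]
  rfl

theorem dzOp_zero : dzOp (0 : Fin n → ℕ) = 1 := by
  simp [dzOp]

theorem dzOp_add_single (b : Fin n → ℕ) (i : Fin n) :
    dzOp (b + Pi.single i 1) = pderivZ i * dzOp b :=
  List.prod_map_pow_add_single commute_pderivZ b (List.nodup_finRange n) (List.mem_finRange i)

theorem commute_dzOp {T : Module.End ℂ (Fz n)} (h : ∀ i, Commute T (pderivZ i))
    (b : Fin n → ℕ) : Commute T (dzOp b) :=
  Commute.list_prod_right _ _ fun D hD => by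
    obtain ⟨i, _, rfl⟩ := List.mem_map.mp hD
    exact (h i).pow_right _

noncomputable def zMon (a : Fin n → ℕ) : Fz n := ∏ i, X (Sum.inl i) ^ a i

theorem zMon_zero : zMon (0 : Fin n → ℕ) = 1 := by
  simp [zMon]

theorem zMon_add_single (a : Fin n → ℕ) (i : Fin n) :
    zMon (a + Pi.single i 1) = zMon a * X (Sum.inl i) := by
  simp only [zMon, Pi.add_apply, pow_add, Finset.prod_mul_distrib]
  congr 1
  simp [Pi.single_apply, pow_ite]

noncomputable def monoOp (k : ℕ) (a b : Fin n → ℕ) : Module.End ℂ (Fz n) :=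
  Algebra.lmul ℂ (Fz n) (X (Sum.inr ()) ^ k * (-X (Sum.inr ())) ^ ∑ i, b i) * dzOp b
    * Algebra.lmul ℂ (Fz n) (zMon a)

theorem monoOp_zero : monoOp 0 (0 : Fin n → ℕ) 0 = 1 := by
  simp only [monoOp, dzOp_zero, zMon_zero, Pi.zero_apply, Finset.sum_const_zero, pow_zero,
    mul_one, map_one]

theorem monoOp_succ (k : ℕ) (a b : Fin n → ℕ) :
    monoOp (k + 1) a b = Algebra.lmul ℂ (Fz n) (X (Sum.inr ())) * monoOp k a b := by
  simp only [monoOp, pow_succ', mul_assoc, map_mul]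

theorem monoOp_add_single_left (k : ℕ) (a b : Fin n → ℕ) (i : Fin n) :
    monoOp k (a + Pi.single i 1) b = monoOp k a b * Algebra.lmul ℂ (Fz n) (X (Sum.inl i)) := by
  simp only [monoOp, zMon_add_single, map_mul, mul_assoc]

theorem monoOp_add_single_right (k : ℕ) (a b : Fin n → ℕ) (i : Fin n) :
    monoOp k a (b + Pi.single i 1)
      = Algebra.lmul ℂ (Fz n) (-X (Sum.inr ())) * pderivZ i * monoOp k a b := by
  have hP : Commute (pderivZ i)
      (Algebra.lmul ℂ (Fz n) (X (Sum.inr ()) ^ k * (-X (Sum.inr ())) ^ ∑ j, b j)) :=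
    commute_pderivZ_lmul (by simp)
  simp only [monoOp, dzOp_add_single, Pi.add_apply, Finset.sum_add_distrib, Finset.sum_pi_single',
    Finset.mem_univ, if_true]
  rw [show (X (Sum.inr ()) ^ k * (-X (Sum.inr ())) ^ (∑ j, b j + 1) : Fz n)
      = -X (Sum.inr ()) * (X (Sum.inr ()) ^ k * (-X (Sum.inr ())) ^ ∑ j, b j) by ring,
    map_mul]
  simp only [mul_assoc]
  rw [← mul_assoc _ (pderivZ i), ← hP.eq, mul_assoc]

noncomputable def bfOp : W n →ₗ[ℂ] Module.End ℂ (Fz n) :=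
  (basisMonomials (V n) ℂ).constr ℂ fun m =>
    monoOp (m (Sum.inr ())) (fun i => m (yv i)) (fun i => m (yb i))

theorem bfOp_monomial (m : V n →₀ ℕ) (c : ℂ) :
    bfOp (monomial m c) = c • monoOp (m (Sum.inr ())) (fun i => m (yv i)) (fun i => m (yb i)) := by
  have h : monomial m c = c • basisMonomials (V n) ℂ m := by simp [smul_monomial]
  rw [h, map_smul, bfOp, Module.Basis.constr_basis]

theorem bf_eq_bfOp (f : W n) (s : Fz n) : bf f s = bfOp f s := by
  rw [bf, bfOp, Module.Basis.constr_apply, LinearMap.finsupp_sum_apply]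
  refine Finset.sum_congr rfl fun m _ => ?_
  change _ = (coeff m f • monoOp _ _ _) s
  simp only [LinearMap.smul_apply, monoOp, Module.End.mul_apply, Algebra.coe_lmul_eq_mul,
    LinearMap.mul_apply_apply, zMon, dz_eq_dzOp, smul_eq_C_mul, mul_assoc]

theorem bfOp_C (c : ℂ) : bfOp (C c : W n) = algebraMap ℂ _ c := by
  rw [← monomial_zero', bfOp_monomial]
  exact congr(c • $monoOp_zero).trans (Algebra.algebraMap_eq_smul_one c).symm

theorem bfOp_one : bfOp (1 : W n) = 1 := by
  simpa using bfOp_C (n := n) 1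

theorem bfOp_X_hbar_mul (f : W n) :
    bfOp (X (Sum.inr ()) * f) = Algebra.lmul ℂ (Fz n) (X (Sum.inr ())) * bfOp f := by
  induction f using MvPolynomial.induction_on' with
  | monomial m c =>
    rw [← pow_one (X (Sum.inr ())), ← monomial_single_add, bfOp_monomial, bfOp_monomial,
      mul_smul_comm, ← monoOp_succ]
    congr 2 <;> simp [yv, yb, add_comm]
  | add p q hp hq => rw [mul_add, map_add, map_add, hp, hq, mul_add]

theorem bfOp_X_yv_mul (i : Fin n) (f : W n) :
    bfOp (X (yv i) * f) = bfOp f * Algebra.lmul ℂ (Fz n) (X (Sum.inl i)) := by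
  induction f using MvPolynomial.induction_on' with
  | monomial m c =>
    rw [← pow_one (X (yv i)), ← monomial_single_add, bfOp_monomial, bfOp_monomial, smul_mul_assoc,
      ← monoOp_add_single_left]
    congr 2
    · simp [yv]
    · ext j; simp [yv, Finsupp.single_apply, Pi.single_apply, eq_comm, add_comm]
    · simp [yv, yb]
  | add p q hp hq => rw [mul_add, map_add, map_add, hp, hq, add_mul]

theorem bfOp_X_yb_mul (i : Fin n) (f : W n) :
    bfOp (X (yb i) * f)
      = Algebra.lmul ℂ (Fz n) (-X (Sum.inr ())) * pderivZ i * bfOp f := by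
  induction f using MvPolynomial.induction_on' with
  | monomial m c =>
    rw [← pow_one (X (yb i)), ← monomial_single_add, bfOp_monomial, bfOp_monomial, mul_smul_comm,
      ← monoOp_add_single_right]
    congr 2
    · simp [yb]
    · simp [yv, yb]
    · ext j; simp [yb, Finsupp.single_apply, Pi.single_apply, eq_comm, add_comm]
  | add p q hp hq => rw [mul_add, map_add, map_add, hp, hq, mul_add]

theorem V_cases (v : V n) : (∃ j, v = yv j) ∨ (∃ j, v = yb j) ∨ v = Sum.inr () := by
  rcases v with (j | j) | ⟨⟩ <;> simp [yv, yb]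

theorem commute_bfOp_lmul {p : Fz n} (hp : ∀ i, pderiv (Sum.inl i) p = 0) (f : W n) :
    Commute (bfOp f) (Algebra.lmul ℂ (Fz n) p) := by
  induction f using MvPolynomial.induction_on' with
  | monomial m c =>
    rw [bfOp_monomial]
    refine Commute.smul_left (((Commute.all _ _).map _).mul_left ?_ |>.mul_left
      ((Commute.all _ _).map _)) c
    exact (commute_dzOp (fun i => (commute_pderivZ_lmul (hp i)).symm) _).symm
  | add p q hp hq => rw [map_add]; exact hp.add_left hq

theorem bfOp_mul_pderivZ (i : Fin n) (f : W n) :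
    bfOp f * pderivZ i = pderivZ i * bfOp f - bfOp (pderiv (yv i) f) := by
  induction f using MvPolynomial.induction_on with
  | C c => rw [bfOp_C, pderiv_C, map_zero, sub_zero, Algebra.commutes]
  | add p q hp hq => rw [map_add, add_mul, hp, hq, map_add, map_add, mul_add]; abel
  | mul_X p v hp =>
    rw [mul_comm p]
    obtain ⟨j, rfl⟩ | ⟨j, rfl⟩ | rfl := V_cases v
    · have hZ : pderivZ i * Algebra.lmul ℂ (Fz n) (X (Sum.inl j))
          = Algebra.lmul ℂ (Fz n) (X (Sum.inl j)) * pderivZ i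
            + Algebra.lmul ℂ (Fz n) (pderiv (Sum.inl i) (X (Sum.inl j))) :=
        pderiv_mul_lmul _ _
      have hδ : bfOp (pderiv (yv i) (X (yv j)) * p)
          = bfOp p * Algebra.lmul ℂ (Fz n) (pderiv (Sum.inl i) (X (Sum.inl j))) := by
        rcases eq_or_ne i j with rfl | h
        · rw [pderiv_X_self, pderiv_X_self, one_mul, map_one, mul_one]
        · simp [yv, h.symm]
      rw [bfOp_X_yv_mul, pderiv_mul, map_add, hδ, bfOp_X_yv_mul, mul_assoc,
        eq_sub_of_add_eq hZ.symm, mul_sub, ← mul_assoc, hp, sub_mul, mul_assoc]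
      abel
    · have hc : Commute (pderivZ i) (Algebra.lmul ℂ (Fz n) (-X (Sum.inr ())) * pderivZ j) :=
        (commute_pderivZ_lmul (by simp)).mul_right (commute_pderivZ i j)
      rw [bfOp_X_yb_mul, pderiv_mul, pderiv_X_of_ne (by simp [yv, yb]), zero_mul, zero_add,
        bfOp_X_yb_mul, mul_assoc, hp, mul_sub, ← mul_assoc (pderivZ i), hc.eq]
      simp only [mul_assoc]
    · rw [bfOp_X_hbar_mul, pderiv_mul, pderiv_X_of_ne (by simp [yv]), zero_mul, zero_add,
        bfOp_X_hbar_mul, mul_assoc, hp, mul_sub, ← mul_assoc (pderivZ i),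
        (commute_pderivZ_lmul (by simp)).eq, mul_assoc]

theorem bfOp_wick (f g : W n) : bfOp (wick f g) = bfOp f * bfOp g := by
  induction g using MvPolynomial.induction_on generalizing f with
  | C c => rw [wick_C_right, ← smul_eq_C_mul, map_smul, bfOp_C, Algebra.smul_def, Algebra.commutes]
  | add p q hp hq => rw [wick_add_right, map_add, hp, hq, map_add, mul_add]
  | mul_X p v hp =>
    rw [mul_comm p]
    obtain ⟨j, rfl⟩ | ⟨j, rfl⟩ | rfl := V_cases v
    · rw [wick_mul_right_of_pderiv_eq_zero (fun i => pderiv_X_of_ne (by simp [yv, yb])),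
        bfOp_X_yv_mul, hp, bfOp_X_yv_mul, mul_assoc]
    · set H := Algebra.lmul ℂ (Fz n) (X (Sum.inr ()))
      set H' := Algebra.lmul ℂ (Fz n) (-X (Sum.inr ()))
      have hH : ∀ T, H * T + H' * T = 0 := fun T => by
        rw [← add_mul, ← map_add, add_neg_cancel, map_zero, zero_mul]
      calc bfOp (wick f (X (yb j) * p))
          = H' * pderivZ j * (bfOp f * bfOp p) + H * (bfOp (pderiv (yv j) f) * bfOp p) := by
            rw [wick_X_yb_mul, map_add, bfOp_X_yb_mul, bfOp_X_hbar_mul, hp, hp]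
        _ = H' * (pderivZ j * bfOp f - bfOp (pderiv (yv j) f)) * bfOp p := by
            rw [mul_sub, sub_mul, eq_sub_iff_add_eq, add_assoc,
              mul_assoc H' (bfOp (pderiv (yv j) f)), hH, add_zero]
            simp only [mul_assoc]
        _ = bfOp f * bfOp (X (yb j) * p) := by
            rw [bfOp_X_yb_mul, ← mul_assoc, ← mul_assoc, (commute_bfOp_lmul (by simp) f).eq,
              mul_assoc _ (bfOp f), bfOp_mul_pderivZ]
    · rw [wick_mul_right_of_pderiv_eq_zero (fun i => pderiv_X_of_ne (by simp [yb])),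
        bfOp_X_hbar_mul, hp, bfOp_X_hbar_mul, ← mul_assoc, ← mul_assoc,
        (commute_bfOp_lmul (fun i => by simp) f).eq]

end Action

theorem bargmann_fock_module_general (n : ℕ) (f g : W n) (s : Fz n) :
    bf f (bf g s) = bf (wick f g) s ∧ bf (1 : W n) s = s := by
  simp only [bf_eq_bfOp, bfOp_wick, bfOp_one, Module.End.mul_apply, Module.End.one_apply, and_self]

theorem bargmann_fock_module (n : ℕ) (hn : 1 ≤ n) (f g : W n) (s : Fz n) :
    bf f (bf g s) = bf (wick f g) s ∧ bf (1 : W n) s = s :=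
  bargmann_fock_module_general n f g s

end Stmt9
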